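/- arXiv:2404.02714 — 3 statements merged into one kernel-verified Lean document; each statement's English description precedes it below -/
import Mathlib

section
/- Let n ≥ k ≥ 2 be positive integers. Then 1 − 2^{C(k,2)−1} is a root of the polynomial Q_{n,k}(t) if and only if n ≥ R(k). -/
open Finset

/-- The k-th diagonal Ramsey number. -/
noncomputable def diagonalRamsey (k : ℕ) : ℕ :=
  sInf {n : ℕ | 0 < n ∧ ∀ G : SimpleGraph (Fin n),
    (∃ s : Finset (Fin n), G.IsNClique k s) ∨ (∃ s : Finset (Fin n), Gᶜ.IsNClique k s)}

/-- The set of `k`-element subsets of `[n]`. -/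
def ksubsets (n k : ℕ) : Finset (Finset (Fin n)) :=
  Finset.powersetCard k (Finset.univ : Finset (Fin n))

/-- The set `B` of assignments `h` associating to each `k`-element subset `S` of `[n]`
a graph on the vertex set `S` (given by its edge set, a set of `2`-element subsets of `S`)
such that every `|E(h_S)|` is even and every `2`-element subset `e` of `[n]` lies in
`E(h_S)` for an even number of `S`. -/
def RamseyB (n k : ℕ) : Finset (Finset (Fin n) → Finset (Finset (Fin n))) :=
  Finset.univ.filter fun h =>
    (∀ S ∈ ksubsets n k, h S ⊆ Finset.powersetCard 2 S ∧ Even (h S).card) ∧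
    (∀ S, S ∉ ksubsets n k → h S = ∅) ∧
    (∀ e ∈ Finset.powersetCard 2 (Finset.univ : Finset (Fin n)),
      Even ((ksubsets n k).filter fun S => e ∈ h S).card)

/-- The polynomial `Q_{n,k}(t) = Σ_{h ∈ B} t^{|Empty(h)|}`. -/
noncomputable def Qnk (n k : ℕ) : Polynomial ℤ :=
  ∑ h ∈ RamseyB n k,
    Polynomial.X ^ ((ksubsets n k).filter fun S => h S = ∅).card

/-!
Write `E` for the pairs of `[n]`, `K` for the `k`-subsets and `m = C(k,2)`. Detecting the parity
condition on each pair by the character sum `2^{-|E|} ∑_{σ ⊆ E} (-1)^{…}` and factoring over `K`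
gives
`2^{|E|} Q_{n,k}(t) = ∑_{σ ⊆ E} ∏_{S ∈ K} ∑_{g} (-1)^{|g ∩ σ|} t^{[g = ∅]}`,
the inner sum running over the even edge sets `g` of the complete graph on `S`. By the even-part
generating function `∑_{g even} ∏_{i ∈ g} a_i = (∏ (1 + a_i) + ∏ (1 - a_i)) / 2`, the inner sum is
`2^{m-1} [S is monochromatic under the colouring σ] + t - 1`. At `t = 1 - 2^{m-1}` every factor is
therefore `0` or `-2^{m-1}`, so `Q_{n,k}(t)` is a nonzero multiple of the number of colourings of
`E` without a monochromatic `k`-set, which vanishes exactly when `n ≥ R(k)`.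
-/
namespace Finset

variable {ι R : Type*} [CommRing R]

theorem sum_powerset_prod_neg_one_pow (s : Finset ι) (c : ι → ℕ) :
    ∑ t ∈ s.powerset, ∏ i ∈ t, (-1 : R) ^ c i = if ∀ i ∈ s, Even (c i) then 2 ^ #s else 0 := by
  have hfactor : ∀ i ∈ s, 1 + (-1 : R) ^ c i = if Even (c i) then 2 else 0 := by
    intro i _
    split_ifs with hc
    · rw [hc.neg_one_pow, one_add_one_eq_two]
    · rw [(Nat.not_even_iff_odd.mp hc).neg_one_pow, add_neg_cancel]
  rw [← prod_one_add, prod_congr rfl hfactor, prod_ite_zero, prod_const]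

theorem two_mul_sum_powerset_even_card_prod (s : Finset ι) (a : ι → R) :
    2 * ∑ t ∈ s.powerset with Even #t, ∏ i ∈ t, a i
      = ∏ i ∈ s, (1 + a i) + ∏ i ∈ s, (1 - a i) := by
  have hsign : ∀ t : Finset ι, (1 + (-1) ^ #t) * ∏ i ∈ t, a i
      = if Even #t then 2 * ∏ i ∈ t, a i else 0 := by
    intro t
    split_ifs with ht
    · rw [ht.neg_one_pow, one_add_one_eq_two]
    · rw [(Nat.not_even_iff_odd.mp ht).neg_one_pow, add_neg_cancel, zero_mul]
  simp_rw [sub_eq_add_neg, prod_one_add, prod_neg, ← sum_add_distrib, ← one_add_mul, hsign,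
    ← sum_filter, mul_sum]

theorem prod_ite_mem_neg_one [DecidableEq ι] (t T : Finset ι) :
    ∏ i ∈ t, (if i ∈ T then (-1 : R) else 1) = (-1) ^ #(t ∩ T) := by
  rw [prod_ite, prod_const, prod_const_one, mul_one, filter_mem_eq_inter]

theorem sum_powerset_even_card_neg_one_pow_card_inter [DecidableEq ι] {s : Finset ι}
    (hs : s.Nonempty) (T : Finset ι) :
    ∑ t ∈ s.powerset with Even #t, (-1 : ℤ) ^ #(t ∩ T)
      = if Disjoint s T ∨ s ⊆ T then 2 ^ (#s - 1) else 0 := by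
  have hdisj : ∏ i ∈ s, (1 + if i ∈ T then (-1 : ℤ) else 1)
      = if Disjoint s T then 2 ^ #s else 0 := by
    have : ∀ i ∈ s, (1 + if i ∈ T then (-1 : ℤ) else 1) = if i ∉ T then 2 else 0 := by
      intro i _; split_ifs <;> norm_num
    rw [prod_congr rfl this, prod_ite_zero, prod_const]
    exact if_congr disjoint_left.symm rfl rfl
  have hsub : ∏ i ∈ s, (1 - if i ∈ T then (-1 : ℤ) else 1) = if s ⊆ T then 2 ^ #s else 0 := by
    have : ∀ i ∈ s, (1 - if i ∈ T then (-1 : ℤ) else 1) = if i ∈ T then 2 else 0 := by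
      intro i _; split_ifs <;> norm_num
    rw [prod_congr rfl this, prod_ite_zero, prod_const]
    rfl
  have htwo := two_mul_sum_powerset_even_card_prod s fun i => if i ∈ T then (-1 : ℤ) else 1
  simp only [prod_ite_mem_neg_one, hdisj, hsub] at htwo
  have hexcl : ¬ (Disjoint s T ∧ s ⊆ T) := fun ⟨h₁, h₂⟩ =>
    hs.ne_empty ((disjoint_self_iff_empty s).mp (h₁.mono_right h₂))
  have hpow : (2 : ℤ) ^ #s = 2 * 2 ^ (#s - 1) := by
    rw [← pow_succ', Nat.sub_add_cancel hs.card_pos]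
  refine mul_left_cancel₀ two_ne_zero (htwo.trans ?_)
  split_ifs <;> simp_all

theorem sum_powerset_even_card_neg_one_pow_card_inter_mul_ite_empty [DecidableEq ι] {s : Finset ι}
    (hs : s.Nonempty) (T : Finset ι) :
    ∑ t ∈ s.powerset with Even #t,
        (-1 : ℤ) ^ #(t ∩ T) * (if t = ∅ then 1 - 2 ^ (#s - 1) else 1)
      = if Disjoint s T ∨ s ⊆ T then 0 else -2 ^ (#s - 1) := by
  have hsplit : ∀ t : Finset ι, (-1 : ℤ) ^ #(t ∩ T) * (if t = ∅ then 1 - 2 ^ (#s - 1) else 1)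
      = (-1) ^ #(t ∩ T) + if t = ∅ then -2 ^ (#s - 1) else 0 := by
    intro t
    split_ifs with ht <;> simp [ht]
    ring
  have hempty : (∅ : Finset ι) ∈ s.powerset.filter (Even ·.card) := by simp
  rw [sum_congr rfl fun t _ => hsplit t, sum_add_distrib,
    sum_powerset_even_card_neg_one_pow_card_inter hs, sum_ite_eq' _ _ _, if_pos hempty]
  split_ifs <;> ring

theorem sum_powerset_prod_neg_one_pow_card_inter [DecidableEq ι] {κ : Type*} (E : Finset ι)
    (K : Finset κ) (h : κ → Finset ι) :
    ∑ σ ∈ E.powerset, ∏ S ∈ K, (-1 : ℤ) ^ #(h S ∩ σ)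
      = if ∀ e ∈ E, Even #{S ∈ K | e ∈ h S} then 2 ^ #E else 0 := by
  have hcount : ∀ σ : Finset ι, ∑ S ∈ K, #(h S ∩ σ) = ∑ e ∈ σ, #{S ∈ K | e ∈ h S} := by
    intro σ
    simp_rw [card_filter, inter_comm _ σ, ← filter_mem_eq_inter, card_filter]
    exact sum_comm
  simp_rw [prod_pow_eq_pow_sum, hcount, ← prod_pow_eq_pow_sum]
  exact sum_powerset_prod_neg_one_pow E _

end Finset

theorem Fintype.sum_piFinset_prod_eq_prod_sum {ι β R : Type*} [Fintype ι] [DecidableEq ι]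
    [CommSemiring R] (t : ι → Finset β) (K : Finset ι) (b : ι → β)
    (ht : ∀ i ∉ K, t i = {b i}) (f : ι → β → R) :
    ∑ x ∈ piFinset t, ∏ i ∈ K, f i (x i) = ∏ i ∈ K, ∑ j ∈ t i, f i j := by
  have hsum : ∀ i, ∑ j ∈ t i, (if i ∈ K then f i j else 1)
      = if i ∈ K then ∑ j ∈ t i, f i j else 1 := by
    intro i
    split_ifs with hi
    · rfl
    · rw [ht i hi, Finset.sum_singleton]
  rw [← Fintype.prod_ite_mem, ← Finset.prod_congr rfl fun i _ => hsum i, Finset.prod_univ_sum]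
  simp_rw [Fintype.prod_ite_mem]

def evenEdgeSets {α : Type*} (S : Finset α) : Finset (Finset (Finset α)) :=
  (powersetCard 2 S).powerset.filter (Even ·.card)

-- `σ` is the set of red pairs of a red/blue colouring of the pairs.
def IsMonochromatic {α : Type*} (σ : Finset (Finset α)) (S : Finset α) : Prop :=
  Disjoint (powersetCard 2 S) σ ∨ powersetCard 2 S ⊆ σ

instance {α : Type*} [DecidableEq α] (σ : Finset (Finset α)) (S : Finset α) :
    Decidable (IsMonochromatic σ S) :=
  inferInstanceAs (Decidable (_ ∨ _))

theorem RamseyB_eq_filter_piFinset (n k : ℕ) :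
    RamseyB n k =
      (Fintype.piFinset fun S => if S ∈ ksubsets n k then evenEdgeSets S else {∅}).filter fun h =>
        ∀ e ∈ powersetCard 2 univ, Even #{S ∈ ksubsets n k | e ∈ h S} := by
  ext h
  simp only [RamseyB, mem_filter, mem_univ, true_and, Fintype.mem_piFinset, ← and_assoc]
  refine and_congr_left fun _ =>
    ⟨fun ⟨hin, hout⟩ S => ?_, fun H => ⟨fun S hS => ?_, fun S hS => ?_⟩⟩
  · split_ifs with hS
    · simpa [evenEdgeSets] using hin S hS
    · simpa using hout S hS
  · simpa [hS, evenEdgeSets] using H S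
  · simpa [hS] using H S

theorem eval_Qnk (n k : ℕ) (t : ℤ) :
    (Qnk n k).eval t = ∑ h ∈ RamseyB n k, ∏ S ∈ ksubsets n k, if h S = ∅ then t else 1 := by
  simp only [Qnk, Polynomial.eval_finsetSum, Polynomial.eval_pow, Polynomial.eval_X,
    prod_ite, prod_const, one_pow, mul_one]

theorem two_pow_mul_eval_Qnk {n k : ℕ} (hk : 2 ≤ k) :
    2 ^ #(powersetCard 2 (univ : Finset (Fin n))) * (Qnk n k).eval (1 - 2 ^ (k.choose 2 - 1))
      = ∑ σ ∈ (powersetCard 2 univ).powerset, ∏ S ∈ ksubsets n k,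
          if IsMonochromatic σ S then 0 else -2 ^ (k.choose 2 - 1) := by
  set E := powersetCard 2 (univ : Finset (Fin n))
  set K := ksubsets n k
  set w : Finset (Finset (Fin n)) → ℤ := fun g => if g = ∅ then 1 - 2 ^ (k.choose 2 - 1) else 1
  have hinner : ∀ σ, ∀ S ∈ K, ∑ g ∈ evenEdgeSets S, (-1) ^ #(g ∩ σ) * w g
      = if IsMonochromatic σ S then 0 else -2 ^ (k.choose 2 - 1) := by
    intro σ S hS
    have hcard : #(powersetCard 2 S) = k.choose 2 := by
      rw [card_powersetCard, (mem_powersetCard.mp hS).2]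
    have hne : (powersetCard 2 S).Nonempty := by
      rw [← card_pos, hcard]
      exact Nat.choose_pos hk
    have := sum_powerset_even_card_neg_one_pow_card_inter_mul_ite_empty hne σ
    rw [hcard] at this
    exact this
  calc 2 ^ #E * (Qnk n k).eval (1 - 2 ^ (k.choose 2 - 1))
      = ∑ h ∈ Fintype.piFinset fun S => if S ∈ K then evenEdgeSets S else {∅},
          2 ^ #E * if ∀ e ∈ E, Even #{S ∈ K | e ∈ h S} then ∏ S ∈ K, w (h S) else 0 := by
        rw [eval_Qnk, RamseyB_eq_filter_piFinset, sum_filter, mul_sum]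
    _ = ∑ h ∈ Fintype.piFinset fun S => if S ∈ K then evenEdgeSets S else {∅},
          ∑ σ ∈ E.powerset, ∏ S ∈ K, (-1) ^ #(h S ∩ σ) * w (h S) := by
        refine sum_congr rfl fun h _ => ?_
        simp_rw [prod_mul_distrib, ← sum_mul, sum_powerset_prod_neg_one_pow_card_inter,
          ite_zero_mul, mul_ite, mul_zero]
        congr -- the two sides differ only in their `Decidable` instances
    _ = ∑ σ ∈ E.powerset, ∏ S ∈ K, ∑ g ∈ evenEdgeSets S, (-1) ^ #(g ∩ σ) * w g := by
        rw [sum_comm]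
        refine sum_congr rfl fun σ _ => ?_
        rw [Fintype.sum_piFinset_prod_eq_prod_sum _ K (fun _ => ∅) (fun S hS => if_neg hS)
          fun S g => (-1) ^ #(g ∩ σ) * w g]
        exact prod_congr rfl fun S hS => by rw [if_pos hS]
    _ = _ := sum_congr rfl fun σ _ => prod_congr rfl fun S hS => hinner σ S hS

theorem eval_Qnk_eq_zero_iff {n k : ℕ} (hk : 2 ≤ k) :
    (Qnk n k).eval (1 - 2 ^ (k.choose 2 - 1)) = 0 ↔
      ∀ σ ⊆ powersetCard 2 (univ : Finset (Fin n)), ∃ S ∈ ksubsets n k, IsMonochromatic σ S := by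
  have h := two_pow_mul_eval_Qnk (n := n) hk
  have hterm : ∀ σ : Finset (Finset (Fin n)), (∏ S ∈ ksubsets n k,
      if IsMonochromatic σ S then (0 : ℤ) else -2 ^ (k.choose 2 - 1))
      = if ∀ S ∈ ksubsets n k, ¬IsMonochromatic σ S then (-2 ^ (k.choose 2 - 1)) ^ #(ksubsets n k)
        else 0 := by
    intro σ
    rw [prod_congr rfl fun S _ => (ite_not _ _ _).symm, prod_ite_zero, prod_const]
    congr -- the two sides differ only in their `Decidable` instances
  simp_rw [hterm, sum_ite, sum_const_zero, add_zero, sum_const, nsmul_eq_mul] at h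
  rw [← mul_right_inj' (pow_ne_zero _ two_ne_zero), h, mul_zero, mul_eq_zero,
    or_iff_left (pow_ne_zero _ (neg_ne_zero.mpr (pow_ne_zero _ two_ne_zero))), Nat.cast_eq_zero,
    card_eq_zero, filter_eq_empty_iff]
  simp only [mem_powerset, not_forall, not_not, exists_prop]

def HasRamseyProperty (s t n : ℕ) : Prop :=
  ∀ G : SimpleGraph (Fin n), (∃ A : Finset (Fin n), G.IsNClique s A) ∨
    ∃ A : Finset (Fin n), Gᶜ.IsNClique t A

theorem SimpleGraph.compl_comap_embedding {V W : Type*} (f : V ↪ W) (G : SimpleGraph W) :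
    (G.comap f)ᶜ = Gᶜ.comap f := by
  ext a b
  simp [f.injective.ne_iff]

namespace HasRamseyProperty

variable {s t n : ℕ}

theorem exists_subset (H : HasRamseyProperty s t n) {V : Type*} [DecidableEq V]
    (G : SimpleGraph V) {T : Finset V} (hT : n ≤ #T) :
    (∃ A ⊆ T, G.IsNClique s A) ∨ ∃ A ⊆ T, Gᶜ.IsNClique t A := by
  obtain ⟨e⟩ := Function.Embedding.nonempty_of_card_le (α := Fin n) (β := T) (by simpa using hT)
  set f := e.trans (Function.Embedding.subtype (· ∈ T))
  have hf : ∀ A : Finset (Fin n), A.map f ⊆ T := fun A x hx => by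
    obtain ⟨a, -, rfl⟩ := mem_map.mp hx
    exact (e a).2
  rcases H (G.comap f) with ⟨A, hA⟩ | ⟨A, hA⟩
  · exact Or.inl ⟨A.map f, hf A, hA.map.mono (SimpleGraph.map_comap_le f G)⟩
  · rw [SimpleGraph.compl_comap_embedding] at hA
    exact Or.inr ⟨A.map f, hf A, hA.map.mono (SimpleGraph.map_comap_le f Gᶜ)⟩

theorem mono {m : ℕ} (H : HasRamseyProperty s t n) (hnm : n ≤ m) : HasRamseyProperty s t m :=
  fun G => (H.exists_subset G (T := univ) (by simpa using hnm)).imp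
    (fun ⟨A, _, hA⟩ => ⟨A, hA⟩) fun ⟨A, _, hA⟩ => ⟨A, hA⟩

theorem succ_succ {n₁ n₂ : ℕ} (H₁ : HasRamseyProperty s (t + 1) n₁)
    (H₂ : HasRamseyProperty (s + 1) t n₂) : HasRamseyProperty (s + 1) (t + 1) (n₁ + n₂ + 1) := by
  intro G
  classical
  set v : Fin (n₁ + n₂ + 1) := 0
  set N := (univ.erase v).filter (G.Adj v)
  set M := (univ.erase v).filter fun w => ¬G.Adj v w
  have hNM : #N + #M = n₁ + n₂ := by
    rw [card_filter_add_card_filter_not, card_erase_of_mem (mem_univ v), card_univ,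
      Fintype.card_fin, Nat.add_sub_cancel]
  by_cases hN : n₁ ≤ #N
  · rcases H₁.exists_subset G hN with ⟨A, hAN, hA⟩ | ⟨A, -, hA⟩
    · exact Or.inl ⟨insert v A, hA.insert fun b hb => (mem_filter.mp (hAN hb)).2⟩
    · exact Or.inr ⟨A, hA⟩
  · rcases H₂.exists_subset G (T := M) (by omega) with ⟨A, -, hA⟩ | ⟨A, hAM, hA⟩
    · exact Or.inl ⟨A, hA⟩
    · refine Or.inr ⟨insert v A, hA.insert fun b hb => ?_⟩
      obtain ⟨hbv, hvb⟩ := mem_filter.mp (hAM hb)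
      exact (SimpleGraph.compl_adj G v b).mpr ⟨(ne_of_mem_erase hbv).symm, hvb⟩

end HasRamseyProperty

theorem exists_hasRamseyProperty : ∀ s t : ℕ, ∃ n, HasRamseyProperty s t n
  | 0, _ => ⟨0, fun _ => Or.inl ⟨∅, by simp⟩⟩
  | _ + 1, 0 => ⟨0, fun _ => Or.inr ⟨∅, by simp⟩⟩
  | s + 1, t + 1 =>
    have ⟨_, H₁⟩ := exists_hasRamseyProperty s (t + 1)
    have ⟨_, H₂⟩ := exists_hasRamseyProperty (s + 1) t
    ⟨_, H₁.succ_succ H₂⟩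

theorem diagonalRamsey_le_iff {k n : ℕ} (hn : 0 < n) :
    diagonalRamsey k ≤ n ↔ HasRamseyProperty k k n := by
  refine ⟨fun hle => ?_, fun H => Nat.sInf_le ⟨hn, H⟩⟩
  obtain ⟨N, HN⟩ := exists_hasRamseyProperty k k
  have hmem := Nat.sInf_mem (s := {n | 0 < n ∧ HasRamseyProperty k k n})
    ⟨N + 1, N.succ_pos, HN.mono N.le_succ⟩
  exact hmem.2.mono hle

section PairGraph

variable {V : Type*} [DecidableEq V]

theorem Finset.forall_mem_powersetCard_two {S : Finset V} {p : Finset V → Prop} :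
    (∀ e ∈ powersetCard 2 S, p e) ↔ ∀ a ∈ S, ∀ b ∈ S, a ≠ b → p {a, b} := by
  refine ⟨fun H a ha b hb hab => H _ ?_, fun H e he => ?_⟩
  · exact mem_powersetCard.mpr ⟨insert_subset ha (singleton_subset_iff.mpr hb), card_pair hab⟩
  · obtain ⟨hsub, hcard⟩ := mem_powersetCard.mp he
    obtain ⟨a, b, hab, rfl⟩ := card_eq_two.mp hcard
    exact H a (hsub (mem_insert_self a _)) b (hsub (by simp)) hab

def pairGraph (σ : Finset (Finset V)) : SimpleGraph V :=
  SimpleGraph.fromRel fun a b => {a, b} ∈ σ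

variable {σ : Finset (Finset V)}

theorem pairGraph_adj {a b : V} : (pairGraph σ).Adj a b ↔ a ≠ b ∧ {a, b} ∈ σ := by
  simp [pairGraph, pair_comm b a]

theorem isClique_pairGraph_iff {S : Finset V} :
    (pairGraph σ).IsClique (S : Set V) ↔ powersetCard 2 S ⊆ σ :=
  calc (pairGraph σ).IsClique (S : Set V) ↔ ∀ a ∈ S, ∀ b ∈ S, a ≠ b → {a, b} ∈ σ := by
        simp +contextual [SimpleGraph.isClique_iff, Set.Pairwise, pairGraph_adj]
    _ ↔ powersetCard 2 S ⊆ σ := forall_mem_powersetCard_two.symm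

theorem isClique_compl_pairGraph_iff {S : Finset V} :
    (pairGraph σ)ᶜ.IsClique (S : Set V) ↔ Disjoint (powersetCard 2 S) σ :=
  calc (pairGraph σ)ᶜ.IsClique (S : Set V) ↔ ∀ a ∈ S, ∀ b ∈ S, a ≠ b → {a, b} ∉ σ := by
        simp +contextual [SimpleGraph.isClique_iff, Set.Pairwise, pairGraph_adj]
    _ ↔ Disjoint (powersetCard 2 S) σ := by
        rw [disjoint_left]
        exact (forall_mem_powersetCard_two (p := (· ∉ σ))).symm

theorem exists_pairGraph_eq [Fintype V] (G : SimpleGraph V) :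
    ∃ σ ⊆ powersetCard 2 univ, pairGraph σ = G := by
  classical
  refine ⟨(powersetCard 2 univ).filter fun e => ∀ a ∈ e, ∀ b ∈ e, a ≠ b → G.Adj a b,
    filter_subset _ _, ?_⟩
  ext a b
  simp only [pairGraph_adj, mem_filter, mem_powersetCard, subset_univ, true_and, mem_insert,
    mem_singleton]
  refine ⟨fun h => h.2.2 a (.inl rfl) b (.inr rfl) h.1, fun h => ⟨h.ne, card_pair h.ne, ?_⟩⟩
  rintro x (rfl | rfl) y (rfl | rfl) hxy
  exacts [absurd rfl hxy, h, h.symm, absurd rfl hxy]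

end PairGraph

theorem forall_exists_isMonochromatic_iff {n k : ℕ} :
    (∀ σ ⊆ powersetCard 2 (univ : Finset (Fin n)), ∃ S ∈ ksubsets n k, IsMonochromatic σ S) ↔
      HasRamseyProperty k k n := by
  have mem_ksubsets : ∀ S : Finset (Fin n), S ∈ ksubsets n k ↔ #S = k := fun S => by
    simp [ksubsets, mem_powersetCard]
  refine ⟨fun H G => ?_, fun H σ _ => ?_⟩
  · obtain ⟨σ, hσ, rfl⟩ := exists_pairGraph_eq G
    obtain ⟨S, hS, hmono | hmono⟩ := H σ hσ
    · exact Or.inr ⟨S, isClique_compl_pairGraph_iff.mpr hmono, (mem_ksubsets S).mp hS⟩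
    · exact Or.inl ⟨S, isClique_pairGraph_iff.mpr hmono, (mem_ksubsets S).mp hS⟩
  · rcases H (pairGraph σ) with ⟨S, hS⟩ | ⟨S, hS⟩
    · exact ⟨S, (mem_ksubsets S).mpr hS.card_eq, .inr (isClique_pairGraph_iff.mp hS.isClique)⟩
    · exact ⟨S, (mem_ksubsets S).mpr hS.card_eq,
        .inl (isClique_compl_pairGraph_iff.mp hS.isClique)⟩

theorem stmt_10 (n k : ℕ) (hk : 2 ≤ k) (hkn : k ≤ n) :
    (Qnk n k).IsRoot (1 - 2 ^ (k.choose 2 - 1)) ↔ diagonalRamsey k ≤ n := by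
  rw [Polynomial.IsRoot.def, eval_Qnk_eq_zero_iff hk, forall_exists_isMonochromatic_iff,
    diagonalRamsey_le_iff (by omega)]
end

section
/- Let n ≥ k ≥ 2 be positive integers with k ≡ 2 or 3 (mod 4) and with C(n,k) odd. Then the map σ defined by σ(M) := I(n,k) − M (entrywise subtraction) is a well-defined map from E° to E°, it is an involution (σ(σ(M)) = M for all M ∈ E°), and it is sign-reversing: sign(σ(M)) = −sign(M) for all M ∈ E°. Consequently, Σ_{M ∈ E°} (−1)^{|M|} = 0. -/
open Finset

/-- Row index type: `2`-element subsets of `[n]`. -/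
abbrev RowIdx (n : ℕ) := {e : Finset (Fin n) // e ∈ Finset.powersetCard 2 (Finset.univ : Finset (Fin n))}

/-- Column index type: `k`-element subsets of `[n]`. -/
abbrev ColIdx (n k : ℕ) := {S : Finset (Fin n) // S ∈ Finset.powersetCard k (Finset.univ : Finset (Fin n))}

/-- Decidability of `M e S = true` for a `Bool`-valued matrix (found automatically by the older Lean). -/
instance matrixBoolEntryDecidable {n k : ℕ} (M : Matrix (RowIdx n) (ColIdx n k) Bool)
    (e : RowIdx n) (S : ColIdx n k) : Decidable (M e S = true) :=
  instDecidableEqBool (M e S) true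

/-- The incidence matrix `I(n,k)`, with `(e,S)`-entry `true` iff `e ⊆ S`.
`{0,1}`-matrices are encoded as `Bool`-valued matrices. -/
def Ink (n k : ℕ) : Matrix (RowIdx n) (ColIdx n k) Bool :=
  Matrix.of fun e S => decide (e.1 ⊆ S.1)

/-- `|M|`: the total number of ones (entries equal to `true`) of `M`. -/
def wt {n k : ℕ} (M : Matrix (RowIdx n) (ColIdx n k) Bool) : ℕ :=
  (Finset.univ.filter fun p : RowIdx n × ColIdx n k => M p.1 p.2 = true).card

/-- `Edges(M)`: the set of rows of `M` containing at least one `1`. -/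
def mEdges {n k : ℕ} (M : Matrix (RowIdx n) (ColIdx n k) Bool) : Finset (RowIdx n) :=
  Finset.univ.filter fun e => ∃ S, M e S = true

/-- The set `A'` of `{0,1}`-matrices `M ⪯ I(n,k)` each of whose columns has at least `1`
and at most `C(k,2) - 1` ones. -/
def matA (n k : ℕ) : Finset (Matrix (RowIdx n) (ColIdx n k) Bool) :=
  Finset.univ.filter fun M =>
    (∀ e S, M e S = true → Ink n k e S = true) ∧
    ∀ S : ColIdx n k,
      1 ≤ (Finset.univ.filter fun e => M e S = true).card ∧
      (Finset.univ.filter fun e => M e S = true).card ≤ k.choose 2 - 1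

/-- `E_m`: the set of `M ∈ A'` with `|Edges(M)| = m`. -/
def matE (n k m : ℕ) : Finset (Matrix (RowIdx n) (ColIdx n k) Bool) :=
  (matA n k).filter fun M => (mEdges M).card = m

/-- `E°`: the set of `M ∈ E_{C(n,2)}` each of whose rows has at least `1` and at most
`C(n-2,k-2) - 1` ones. -/
def matEcirc (n k : ℕ) : Finset (Matrix (RowIdx n) (ColIdx n k) Bool) :=
  (matE n k (n.choose 2)).filter fun M =>
    ∀ e : RowIdx n,
      1 ≤ (Finset.univ.filter fun S => M e S = true).card ∧
      (Finset.univ.filter fun S => M e S = true).card ≤ (n - 2).choose (k - 2) - 1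

/-- The map `σ(M) = I(n,k) − M` (entrywise subtraction of `{0,1}`-matrices with `M ⪯ I(n,k)`,
realized on `Bool` entries as `I(n,k) ∧ ¬M`). -/
def sigmaMap (n k : ℕ) (M : Matrix (RowIdx n) (ColIdx n k) Bool) :
    Matrix (RowIdx n) (ColIdx n k) Bool :=
  Matrix.of fun e S => Ink n k e S && !(M e S)

/-!
Complementing inside `I(n,k)` turns a row with `r` ones into one with `C(n-2,k-2) - r` ones and
a column with `c` ones into one with `C(k,2) - c` ones, so it maps `E°` to itself. Moreover
`|M| + |σ M| = |I(n,k)| = C(n,k) · C(k,2)`, which is odd because `C(k,2)` is odd exactly when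
`k ≡ 2, 3 (mod 4)`; hence `σ` reverses the sign, has no fixed points, and the signed sum cancels.
-/

lemma Finset.card_filter_attach {α : Type*} (p : α → Prop) [DecidablePred p] (s : Finset α) :
    #(s.attach.filter fun a : s => p a) = #(s.filter p) := by
  rw [filter_attach, card_map, card_attach]

lemma card_filter_add_card_filter_and_not {α : Type*} [Fintype α] {p q : α → Bool}
    (hpq : ∀ a, p a = true → q a = true) :
    #{a | p a = true} + #{a | (q a && !p a) = true} = #{a | q a = true} := by
  simp only [card_filter, ← sum_add_distrib]
  refine sum_congr rfl fun a _ => ?_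
  have := hpq a
  cases hp : p a <;> cases hq : q a <;> simp_all

section Incidence

variable {n k : ℕ}

lemma card_filter_Ink_col (S : ColIdx n k) : #{e | Ink n k e S = true} = k.choose 2 := by
  simp only [Ink, Matrix.of_apply, decide_eq_true_eq]
  rw [univ_eq_attach, card_filter_attach (· ⊆ S.1)]
  have : (powersetCard 2 univ).filter (· ⊆ S.1) = powersetCard 2 S.1 := by
    ext A; simp [mem_powersetCard, and_comm]
  rw [this, card_powersetCard, (mem_powersetCard.mp S.2).2]

lemma card_filter_Ink_row (hk : 2 ≤ k) (e : RowIdx n) :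
    #{S | Ink n k e S = true} = (n - 2).choose (k - 2) := by
  have he := (mem_powersetCard.mp e.2).2
  simp only [Ink, Matrix.of_apply, decide_eq_true_eq]
  rw [univ_eq_attach, card_filter_attach (e.1 ⊆ ·),
    card_filter_powersetCard_subset _ _ _ (subset_univ _) (he.le.trans hk), card_univ,
    Fintype.card_fin, he]

lemma wt_eq_sum_card_filter_row (M : Matrix (RowIdx n) (ColIdx n k) Bool) :
    wt M = ∑ e, #{S | M e S = true} := by
  simp only [wt, card_filter, Fintype.sum_prod_type]

lemma card_rowIdx : Fintype.card (RowIdx n) = n.choose 2 := by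
  rw [Fintype.card_coe, card_powersetCard, card_univ, Fintype.card_fin]

lemma wt_Ink (hk : 2 ≤ k) : wt (Ink n k) = n.choose k * k.choose 2 := by
  simp only [wt_eq_sum_card_filter_row, card_filter_Ink_row hk, sum_const, card_univ, card_rowIdx,
    smul_eq_mul, Nat.choose_mul hk]

end Incidence

lemma odd_choose_two_of_mod_four {k : ℕ} (hk : k % 4 = 2 ∨ k % 4 = 3) : Odd (k.choose 2) := by
  have hdvd : 2 ∣ k * (k - 1) := (Nat.even_mul_pred_self k).two_dvd
  have hchoose : k.choose 2 * 2 = k * (k - 1) := by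
    rw [Nat.choose_two_right, Nat.div_mul_cancel hdvd]
  have hmod : k * (k - 1) % 4 = 2 := by
    rw [Nat.mul_mod]
    rcases hk with h | h
    · rw [h, show (k - 1) % 4 = 1 by omega]
    · rw [h, show (k - 1) % 4 = 2 by omega]
  rw [Nat.odd_iff]
  omega

section Complement

variable {n k : ℕ} {M : Matrix (RowIdx n) (ColIdx n k) Bool}

lemma Ink_of_sigmaMap {e : RowIdx n} {S : ColIdx n k} (h : sigmaMap n k M e S = true) :
    Ink n k e S = true := by
  simp only [sigmaMap, Matrix.of_apply, Bool.and_eq_true] at h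
  exact h.1

variable (hM : ∀ e S, M e S = true → Ink n k e S = true)
include hM

lemma sigmaMap_sigmaMap : sigmaMap n k (sigmaMap n k M) = M := by
  funext e S
  have := hM e S
  simp only [sigmaMap, Matrix.of_apply]
  cases hMeS : M e S <;> cases hI : Ink n k e S <;> simp_all

lemma card_filter_col_add_sigmaMap (S : ColIdx n k) :
    #{e | M e S = true} + #{e | sigmaMap n k M e S = true} = k.choose 2 := by
  rw [← card_filter_Ink_col S]
  exact card_filter_add_card_filter_and_not fun e => hM e S

lemma card_filter_row_add_sigmaMap (hk : 2 ≤ k) (e : RowIdx n) :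
    #{S | M e S = true} + #{S | sigmaMap n k M e S = true} = (n - 2).choose (k - 2) := by
  rw [← card_filter_Ink_row hk e]
  exact card_filter_add_card_filter_and_not fun S => hM e S

lemma wt_add_wt_sigmaMap : wt M + wt (sigmaMap n k M) = wt (Ink n k) :=
  card_filter_add_card_filter_and_not fun p => hM p.1 p.2

lemma neg_one_pow_wt_sigmaMap (hodd : Odd (wt (Ink n k))) :
    (-1 : ℤ) ^ wt (sigmaMap n k M) = -(-1 : ℤ) ^ wt M := by
  have h := hodd.neg_one_pow (α := ℤ)
  rw [← wt_add_wt_sigmaMap hM, pow_add] at h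
  rcases neg_one_pow_eq_or ℤ (wt M) with h' | h' <;> rw [h'] at h ⊢ <;> linarith

end Complement

section Ecirc

variable {n k : ℕ} {M : Matrix (RowIdx n) (ColIdx n k) Bool}

lemma mem_matEcirc_iff :
    M ∈ matEcirc n k ↔
      (∀ e S, M e S = true → Ink n k e S = true) ∧
      (∀ S, 1 ≤ #{e | M e S = true} ∧ #{e | M e S = true} ≤ k.choose 2 - 1) ∧
      #(mEdges M) = n.choose 2 ∧
      ∀ e, 1 ≤ #{S | M e S = true} ∧ #{S | M e S = true} ≤ (n - 2).choose (k - 2) - 1 := by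
  simp only [matEcirc, matE, matA, mem_filter, mem_univ, true_and, and_assoc]

lemma card_mEdges_of_forall_row_pos (h : ∀ e, 1 ≤ #{S | M e S = true}) :
    #(mEdges M) = n.choose 2 := by
  have : mEdges M = univ := eq_univ_of_forall fun e => by
    obtain ⟨S, hS⟩ := card_pos.mp (h e)
    exact mem_filter.mpr ⟨mem_univ e, S, (mem_filter.mp hS).2⟩
  rw [this, card_univ, card_rowIdx]

lemma sigmaMap_mem_matEcirc (hk : 2 ≤ k) (hM : M ∈ matEcirc n k) :
    sigmaMap n k M ∈ matEcirc n k := by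
  obtain ⟨hle, hcol, -, hrow⟩ := mem_matEcirc_iff.mp hM
  have hrowσ : ∀ e, 1 ≤ #{S | sigmaMap n k M e S = true} ∧
      #{S | sigmaMap n k M e S = true} ≤ (n - 2).choose (k - 2) - 1 := fun e => by
    have := card_filter_row_add_sigmaMap hle hk e
    have := hrow e
    omega
  refine mem_matEcirc_iff.mpr ⟨fun _ _ => Ink_of_sigmaMap, fun S => ?_,
    card_mEdges_of_forall_row_pos fun e => (hrowσ e).1, hrowσ⟩
  have := card_filter_col_add_sigmaMap hle S
  have := hcol S
  omega

end Ecirc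

theorem stmt_13_general (n k : ℕ) (hk : 2 ≤ k)
    (hkmod : k % 4 = 2 ∨ k % 4 = 3) (hodd : Odd (n.choose k)) :
    (∀ M ∈ matEcirc n k, sigmaMap n k M ∈ matEcirc n k) ∧
    (∀ M ∈ matEcirc n k, sigmaMap n k (sigmaMap n k M) = M) ∧
    (∀ M ∈ matEcirc n k, (-1 : ℤ) ^ wt (sigmaMap n k M) = -((-1 : ℤ) ^ wt M)) ∧
    (∑ M ∈ matEcirc n k, (-1 : ℤ) ^ wt M) = 0 := by
  have hle : ∀ M ∈ matEcirc n k, ∀ e S, M e S = true → Ink n k e S = true :=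
    fun M hM => (mem_matEcirc_iff.mp hM).1
  have hoddI : Odd (wt (Ink n k)) := by
    rw [wt_Ink hk]
    exact hodd.mul (odd_choose_two_of_mod_four hkmod)
  have hsign := fun M hM => neg_one_pow_wt_sigmaMap (hle M hM) hoddI
  refine ⟨fun M => sigmaMap_mem_matEcirc hk, fun M hM => sigmaMap_sigmaMap (hle M hM), hsign,
    ?_⟩
  refine sum_involution (fun M _ => sigmaMap n k M) (fun M hM => by rw [hsign M hM]; ring)
    (fun M hM hne hfix => hne (self_eq_neg.mp (by rw [← hsign M hM, hfix])))
    (fun M => sigmaMap_mem_matEcirc hk) (fun M hM => sigmaMap_sigmaMap (hle M hM))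

theorem stmt_13 (n k : ℕ) (hk : 2 ≤ k) (hkn : k ≤ n)
    (hkmod : k % 4 = 2 ∨ k % 4 = 3) (hodd : Odd (n.choose k)) :
    (∀ M ∈ matEcirc n k, sigmaMap n k M ∈ matEcirc n k) ∧
    (∀ M ∈ matEcirc n k, sigmaMap n k (sigmaMap n k M) = M) ∧
    (∀ M ∈ matEcirc n k, (-1 : ℤ) ^ wt (sigmaMap n k M) = -((-1 : ℤ) ^ wt M)) ∧
    (∑ M ∈ matEcirc n k, (-1 : ℤ) ^ wt M) = 0 :=
  stmt_13_general n k hk hkmod hodd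
end

section
/- Let n ≥ k ≥ 2 be positive integers. For any nonnegative integer m with m < n²/(2(k−1)) − n/2, the coefficient of t^m in P_{n,k}(t) is zero. In particular, every g ∈ A satisfies |Edges(g)| ≥ n²/(2(k−1)) − n/2. -/
open Finset

/-- The set `A` of assignments `g` associating to each `k`-element subset `S` of `[n]`
a graph on the vertex set `S` (given by its edge set, a set of `2`-element subsets of `S`)
which is neither complete nor empty. -/
def RamseyA (n k : ℕ) : Finset (Finset (Fin n) → Finset (Finset (Fin n))) :=
  Finset.univ.filter fun g =>
    (∀ S ∈ ksubsets n k,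
      g S ⊆ Finset.powersetCard 2 S ∧ g S ≠ ∅ ∧ g S ≠ Finset.powersetCard 2 S) ∧
    (∀ S, S ∉ ksubsets n k → g S = ∅)

/-- `Edges(g)`, the union of the edge sets of the graphs `g_S`. -/
def gEdges (n k : ℕ) (g : Finset (Fin n) → Finset (Finset (Fin n))) :
    Finset (Finset (Fin n)) :=
  (ksubsets n k).biUnion g

/-- The polynomial `P_{n,k}(t) = Σ_{g ∈ A} sign(g) t^{|Edges(g)|}`. -/
noncomputable def Pnk (n k : ℕ) : Polynomial ℤ :=
  ∑ g ∈ RamseyA n k,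
    Polynomial.C (∏ S ∈ ksubsets n k, (-1 : ℤ) ^ (g S).card) *
      Polynomial.X ^ (gEdges n k g).card

/-- Key combinatorial lemma (Turán-type bound via maximal independent sets):
if every `k`-subset of `V` contains an edge of `E`, then
`|V|² ≤ (k-1)(2|E| + |V|)`. -/
lemma key_bound {N : ℕ} (k : ℕ) (hk : 2 ≤ k) :
    ∀ (n : ℕ) (V : Finset (Fin N)) (E : Finset (Finset (Fin N))), V.card = n →
      (∀ e ∈ E, e ⊆ V ∧ e.card = 2) →
      (∀ T ⊆ V, T.card = k → ∃ e ∈ E, e ⊆ T) →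
      V.card ^ 2 ≤ (k - 1) * (2 * E.card + V.card) := by
  intro n
  induction n using Nat.strong_induction_on with
  | _ n ih =>
    intro V E hcard hE hcov
    rcases Nat.eq_zero_or_pos V.card with h0 | hpos
    · simp [h0]
    -- the set of independent subsets of V
    set S : Finset (Finset (Fin N)) :=
      V.powerset.filter (fun I => ∀ e ∈ E, ¬ e ⊆ I) with hS
    have hemp : (∅ : Finset (Fin N)) ∈ S := by
      simp only [hS, Finset.mem_filter, Finset.mem_powerset]
      refine ⟨Finset.empty_subset _, fun e he hsub => ?_⟩
      have h2 := (hE e he).2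
      rw [Finset.subset_empty.mp hsub] at h2
      simp at h2
    obtain ⟨I, hIS, hImax⟩ := S.exists_max_image Finset.card ⟨∅, hemp⟩
    rw [hS, Finset.mem_filter, Finset.mem_powerset] at hIS
    obtain ⟨hIV, hIind⟩ := hIS
    -- 1 ≤ |I|
    obtain ⟨v0, hv0⟩ := Finset.card_pos.mp hpos
    have hIpos : 1 ≤ I.card := by
      have : ({v0} : Finset (Fin N)) ∈ S := by
        simp only [hS, Finset.mem_filter, Finset.mem_powerset]
        refine ⟨Finset.singleton_subset_iff.mpr hv0, fun e he hsub => ?_⟩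
        have h2 := (hE e he).2
        have := Finset.card_le_card hsub
        simp at this; omega
      have := hImax _ this
      simpa using this
    -- |I| ≤ k - 1
    have hIk : I.card ≤ k - 1 := by
      by_contra h
      have hkI : k ≤ I.card := by omega
      obtain ⟨T, hTI, hTcard⟩ := Finset.exists_subset_card_eq hkI
      obtain ⟨e, heE, heT⟩ := hcov T (hTI.trans hIV) hTcard
      exact hIind e heE (heT.trans hTI)
    have hIV' : I.card ≤ V.card := Finset.card_le_card hIV
    -- for each v ∈ V \ I there is an edge in insert v I containing v
    have hch : ∀ v : Fin N, ∃ e, v ∈ V \ I → e ∈ E ∧ e ⊆ insert v I ∧ v ∈ e := by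
      intro v
      by_cases hv : v ∈ V \ I
      · rw [Finset.mem_sdiff] at hv
        have hins : insert v I ∉ S := by
          intro hmem
          have := hImax _ hmem
          rw [Finset.card_insert_of_notMem hv.2] at this
          omega
        have : ¬ ∀ e ∈ E, ¬ e ⊆ insert v I := by
          intro hall
          exact hins (by
            simp only [hS, Finset.mem_filter, Finset.mem_powerset]
            exact ⟨Finset.insert_subset hv.1 hIV, hall⟩)
        push_neg at this
        obtain ⟨e, heE, hesub⟩ := this
        refine ⟨e, fun _ => ⟨heE, hesub, ?_⟩⟩
        by_contra hve
        exact hIind e heE (fun x hx => by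
          rcases Finset.mem_insert.mp (hesub hx) with rfl | h
          · exact absurd hx hve
          · exact h)
      · exact ⟨∅, fun h => absurd h hv⟩
    choose f hf using hch
    -- edges touching I
    set F : Finset (Finset (Fin N)) := E.filter (fun e => ¬ e ⊆ V \ I) with hF
    have hinj : Set.InjOn f ((V \ I : Finset (Fin N)) : Set (Fin N)) := by
      intro v hv w hw hvw
      rw [Finset.mem_coe] at hv hw
      have hv' : v ∈ V \ I := hv
      have hw' : w ∈ V \ I := hw
      rw [Finset.mem_sdiff] at hv hw
      have h1 := (hf w hw').2.2
      rw [← hvw] at h1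
      have := (hf v hv').2.1 h1
      rcases Finset.mem_insert.mp this with h | h
      · exact h.symm
      · exact absurd h hw.2
    have hmaps : ∀ v ∈ V \ I, f v ∈ F := by
      intro v hv
      obtain ⟨hfE, hfsub, hvf⟩ := hf v hv
      rw [hF, Finset.mem_filter]
      refine ⟨hfE, fun hsub => ?_⟩
      have h2 : 1 < (f v).card := by rw [(hE _ hfE).2]; omega
      obtain ⟨u, hu, huv⟩ := Finset.exists_mem_ne h2 v
      rcases Finset.mem_insert.mp (hfsub hu) with h | h
      · exact huv h
      · have := hsub hu
        rw [Finset.mem_sdiff] at this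
        exact this.2 h
    have hcardF : (V \ I).card ≤ F.card :=
      Finset.card_le_card_of_injOn f hmaps hinj
    -- edges within V \ I
    set E' : Finset (Finset (Fin N)) := E.filter (fun e => e ⊆ V \ I) with hE'
    have hsplit : E'.card + F.card = E.card := by
      rw [hE', hF]; exact Finset.card_filter_add_card_filter_not _
    -- apply induction hypothesis to V \ I
    have hn' : (V \ I).card = V.card - I.card := Finset.card_sdiff_of_subset hIV
    have hlt : (V \ I).card < n := by omega
    have hIH := ih _ hlt (V \ I) E' rfl
      (fun e he => by
        rw [hE', Finset.mem_filter] at he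
        exact ⟨he.2, (hE e he.1).2⟩)
      (fun T hT hTc => by
        obtain ⟨e, heE, heT⟩ := hcov T (hT.trans (Finset.sdiff_subset)) hTc
        exact ⟨e, Finset.mem_filter.mpr ⟨heE, heT.trans hT⟩, heT⟩)
    -- arithmetic
    set a := I.card
    set m := E.card
    set m' := E'.card
    set nn := V.card
    have h1 : nn - a + a = nn := by omega
    have h2 : m' + (nn - a) ≤ m := by omega
    have hka : a ≤ k - 1 := hIk
    have hk1 : 1 ≤ k - 1 := by omega
    rw [hn'] at hIH
    nlinarith [Nat.mul_le_mul_right (2 * (nn - a) + a) hka, hIH, h2, h1,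
      Nat.mul_le_mul_left (k - 1) h2]

lemma edges_bound (n k : ℕ) (hk : 2 ≤ k) (g : Finset (Fin n) → Finset (Finset (Fin n)))
    (hg : g ∈ RamseyA n k) :
    n ^ 2 ≤ (k - 1) * (2 * (gEdges n k g).card + n) := by
  rw [RamseyA, Finset.mem_filter] at hg
  obtain ⟨-, hg1, hg2⟩ := hg
  have hcard : (Finset.univ : Finset (Fin n)).card = n := by simp
  have := key_bound k hk n Finset.univ (gEdges n k g) hcard
    (fun e he => by
      rw [gEdges, Finset.mem_biUnion] at he
      obtain ⟨S, hS, heS⟩ := he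
      have := (hg1 S hS).1 heS
      rw [Finset.mem_powersetCard] at this
      exact ⟨Finset.subset_univ _, this.2⟩)
    (fun T _ hTc => by
      have hT : T ∈ ksubsets n k := by
        rw [ksubsets, Finset.mem_powersetCard]
        exact ⟨Finset.subset_univ _, hTc⟩
      obtain ⟨hsub, hne, -⟩ := hg1 T hT
      obtain ⟨e, he⟩ := Finset.nonempty_iff_ne_empty.mpr hne
      refine ⟨e, ?_, ?_⟩
      · rw [gEdges, Finset.mem_biUnion]; exact ⟨T, hT, he⟩
      · have := hsub he
        rw [Finset.mem_powersetCard] at this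
        exact this.1)
  rwa [hcard] at this

lemma edges_bound_real (n k : ℕ) (hk : 2 ≤ k) (g : Finset (Fin n) → Finset (Finset (Fin n)))
    (hg : g ∈ RamseyA n k) :
    (n : ℝ) ^ 2 / (2 * ((k : ℝ) - 1)) - (n : ℝ) / 2 ≤ ((gEdges n k g).card : ℝ) := by
  have h := edges_bound n k hk g hg
  have hcast : (n : ℝ) ^ 2 ≤ ((k : ℝ) - 1) * (2 * ((gEdges n k g).card : ℝ) + n) := by
    have := (Nat.cast_le (α := ℝ)).mpr h
    push_cast at this
    rw [Nat.cast_sub (by omega : 1 ≤ k)] at this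
    push_cast at this
    linarith [this]
  have hkpos : (0 : ℝ) < (k : ℝ) - 1 := by
    have : (2 : ℝ) ≤ (k : ℝ) := by exact_mod_cast hk
    linarith
  rw [sub_le_iff_le_add, div_le_iff₀ (by positivity)]
  nlinarith [hcast]

theorem stmt_15 (n k : ℕ) (hk : 2 ≤ k) (hkn : k ≤ n) :
    (∀ m : ℕ, (m : ℝ) < (n : ℝ) ^ 2 / (2 * ((k : ℝ) - 1)) - (n : ℝ) / 2 →
      (Pnk n k).coeff m = 0) ∧
    (∀ g ∈ RamseyA n k,
      (n : ℝ) ^ 2 / (2 * ((k : ℝ) - 1)) - (n : ℝ) / 2 ≤ ((gEdges n k g).card : ℝ)) := by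
  constructor
  · intro m hm
    rw [Pnk, Polynomial.finset_sum_coeff]
    apply Finset.sum_eq_zero
    intro g hg
    rw [Polynomial.coeff_C_mul, Polynomial.coeff_X_pow]
    have hb := edges_bound_real n k hk g hg
    have hne : m ≠ (gEdges n k g).card := by
      intro h
      rw [h] at hm
      linarith [hb, hm]
    rw [if_neg hne, mul_zero]
  · exact fun g hg => edges_bound_real n k hk g hg
end
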